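/- Fix a ∈ [1,3] and r ∈ (0,1/16]. There is a constant C > 0 (depending only on a and r) such that the following holds for any choice of coefficient functions a_k : {−1,1}^k → [1,a] (with a_0 ≡ 1). For all integers 1 ≤ n ≤ m, every x₀ ∈ K_n, and every y ∈ ℝ² with |y − x₀| = r^{n−1}/2, one has | g̃_n(y) − g̃_m(y) | ≤ C 2^{−n}, where g̃_j(y) = 2^{−j} Σ_{ε ∈ 𝓔_j} ln|y − f_j(ε)| for j ≥ 1. -/

import Mathlib

/-!
Write `X σ = f_n(σ)`. If `σ` first differs from the centre word `σ₀` at position `l < n`, the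
`l`-th digit separates `X σ` from `X σ₀` by about `r^l`, while the later digits move it by
`O(r^{l+1})`; since `|y − X σ₀| = r^{n−1}/2 ≤ r^l/2`, this gives `|y − X σ| ≥ r^l/4`. Every
`x ∈ K_m` extending `σ` lies within `2 r^n` of `X σ`, so `ln |y − x|` differs from
`ln |y − X σ|` by `O(r^{n−l})`. At most `2^{n−l}` words share the first `l` letters of `σ₀`,
and `Σ_l (2r)^{n−l} ≤ 1` because `2r ≤ 1/8`; averaging over the `2^m` points of `K_m` gives
the bound `16 · 2^{−n}`.
-/

noncomputable section

/-- The sign `±1 : ℝ` associated to a boolean letter. -/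
def sgn (b : Bool) : ℝ := if b then 1 else -1

/-- `f_j(ε) = Σ_{k=1}^{j} (a_{k−1}(ε)/2) r^{k−1} ε_k` (0-based: sum over `k < j`). -/
def fN (r : ℝ) (A : ℕ → (ℕ → Bool) → ℝ) (j : ℕ) (ε : ℕ → Bool) : ℝ :=
  ∑ k ∈ Finset.range j, A k ε / 2 * r ^ k * sgn (ε k)

/-- A word of length `j` (element of `𝓔_j`), extended to an infinite word by `false`. -/
def extWord (j : ℕ) (σ : Fin j → Bool) : ℕ → Bool :=
  fun k => if h : k < j then σ ⟨k, h⟩ else false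

/-- `g̃_j(y) = 2^{−j} Σ_{x ∈ K_j} ln |y − x|` for `y ∈ ℝ²`, where `ℝ²` is identified with `ℂ`
and `K_j ⊂ ℝ = ℝ×{0} ⊂ ℂ`. -/
def gTilde (r : ℝ) (A : ℕ → (ℕ → Bool) → ℝ) (j : ℕ) (y : ℂ) : ℝ :=
  (2 : ℝ)⁻¹ ^ j * ∑ σ : Fin j → Bool, Real.log ‖y - (fN r A j (extWord j σ) : ℂ)‖

open Finset Real

lemma abs_log_sub_log_le_div {u v c : ℝ} (hc : 0 < c) (hu : c ≤ u) (hv : c ≤ v) :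
    |log u - log v| ≤ |u - v| / c := by
  have key : ∀ {u v : ℝ}, c ≤ v → v ≤ u → log u - log v ≤ (u - v) / c := by
    intro u v hv hvu
    have hv0 : 0 < v := hc.trans_le hv
    calc log u - log v = log (u / v) := (log_div (hv0.trans_le hvu).ne' hv0.ne').symm
      _ ≤ u / v - 1 := log_le_sub_one_of_pos (div_pos (hv0.trans_le hvu) hv0)
      _ = (u - v) / v := by field_simp
      _ ≤ (u - v) / c := div_le_div_of_nonneg_left (sub_nonneg.2 hvu) hc hv
  rcases le_total v u with h | h
  · rw [abs_of_nonneg (sub_nonneg.2 (log_le_log (hc.trans_le hv) h)),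
      abs_of_nonneg (sub_nonneg.2 h)]
    exact key hv h
  · rw [abs_sub_comm, abs_sub_comm u,
      abs_of_nonneg (sub_nonneg.2 (log_le_log (hc.trans_le hu) h)), abs_of_nonneg (sub_nonneg.2 h)]
    exact key hu h

lemma card_filter_agree_le {α : Type*} [Fintype α] [DecidableEq α] (n l : ℕ) (σ₀ : Fin n → α) :
    #{σ : Fin n → α | ∀ k : Fin n, (k : ℕ) < l → σ k = σ₀ k} ≤ Fintype.card α ^ (n - l) := by
  refine (card_le_card_of_injOn (fun σ (j : Fin (n - l)) => σ ⟨l + j, by omega⟩)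
    (fun _ _ => mem_univ _) ?_).trans (by simp)
  intro σ hσ σ' hσ' h
  simp only [coe_filter, mem_univ, true_and, Set.mem_ofPred_eq] at hσ hσ'
  funext k
  by_cases hk : (k : ℕ) < l
  · rw [hσ k hk, hσ' k hk]
  · simpa [show l + (k - l) = k by omega] using congrFun h ⟨k - l, by omega⟩

lemma sum_pow_sub_le_one {n : ℕ} {σ₀ : Fin n → Bool} {q : ℝ} (hq0 : 0 ≤ q) (hq : q ≤ 1 / 4)
    (L : (Fin n → Bool) → ℕ) (hL : ∀ σ, L σ < n)
    (hagree : ∀ σ (k : Fin n), (k : ℕ) < L σ → σ k = σ₀ k) :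
    ∑ σ, q ^ (n - L σ) ≤ 1 := by
  have hmaps : ∀ σ ∈ (univ : Finset (Fin n → Bool)), n - L σ ∈ Ico 1 (n + 1) :=
    fun σ _ => mem_Ico.2 ⟨by have := hL σ; omega, by omega⟩
  have hfiber : ∀ j ∈ Ico 1 (n + 1),
      ∑ σ : Fin n → Bool with n - L σ = j, q ^ (n - L σ) ≤ (2 * q) ^ j := by
    intro j hj
    have hjn : j ≤ n := by rw [mem_Ico] at hj; omega
    have hsub : ({σ | n - L σ = j} : Finset (Fin n → Bool)) ⊆
        ({σ | ∀ k : Fin n, (k : ℕ) < n - j → σ k = σ₀ k} : Finset (Fin n → Bool)) := by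
      intro σ hσ
      simp only [mem_filter, mem_univ, true_and] at hσ ⊢
      exact fun k hk => hagree σ k (by have := hL σ; omega)
    have hcard : (#{σ | n - L σ = j} : ℝ) ≤ 2 ^ j := by
      have := (card_le_card hsub).trans (card_filter_agree_le n (n - j) σ₀)
      rw [Fintype.card_bool, Nat.sub_sub_self hjn] at this
      exact_mod_cast this
    calc ∑ σ : Fin n → Bool with n - L σ = j, q ^ (n - L σ) = #{σ | n - L σ = j} * q ^ j := by
          rw [sum_congr rfl fun σ hσ => by rw [(mem_filter.1 hσ).2], sum_const, nsmul_eq_mul]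
      _ ≤ 2 ^ j * q ^ j := by gcongr
      _ = (2 * q) ^ j := (mul_pow _ _ _).symm
  calc ∑ σ, q ^ (n - L σ)
        = ∑ j ∈ Ico 1 (n + 1), ∑ σ : Fin n → Bool with n - L σ = j, q ^ (n - L σ) :=
        (sum_fiberwise_of_maps_to hmaps _).symm
    _ ≤ ∑ j ∈ Ico 1 (n + 1), (2 * q) ^ j := sum_le_sum hfiber
    _ ≤ (2 * q) ^ 1 / (1 - 2 * q) := geom_sum_Ico_le_of_lt_one (by positivity) (by linarith)
    _ ≤ 1 := by rw [div_le_one (by linarith)]; linarith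

lemma abs_sgn (b : Bool) : |sgn b| = 1 := by cases b <;> simp [sgn]

lemma abs_sgn_sub_sgn {b b' : Bool} (h : b ≠ b') : |sgn b - sgn b'| = 2 := by
  cases b <;> cases b' <;> simp_all [sgn] <;> norm_num

lemma extWord_of_lt {j k : ℕ} (σ : Fin j → Bool) (h : k < j) : extWord j σ k = σ ⟨k, h⟩ :=
  dif_pos h

lemma extWord_of_le {j k : ℕ} (σ : Fin j → Bool) (h : j ≤ k) : extWord j σ k = false :=
  dif_neg (not_lt.2 h)

lemma extWord_append_of_lt {n d k : ℕ} (σ : Fin n → Bool) (τ : Fin d → Bool) (h : k < n) :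
    extWord (n + d) (Fin.append σ τ) k = extWord n σ k := by
  rw [extWord_of_lt _ (by omega), extWord_of_lt _ h]
  exact Fin.append_left σ τ ⟨k, h⟩

section Expansion

variable {r a : ℝ} {A : ℕ → (ℕ → Bool) → ℝ}

lemma fN_succ (j : ℕ) (ε : ℕ → Bool) :
    fN r A (j + 1) ε = fN r A j ε + A j ε / 2 * r ^ j * sgn (ε j) :=
  sum_range_succ _ _

lemma fN_congr (hloc : ∀ k ε ε', (∀ i < k, ε i = ε' i) → A k ε = A k ε') {j : ℕ}
    {ε ε' : ℕ → Bool} (h : ∀ k < j, ε k = ε' k) : fN r A j ε = fN r A j ε' :=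
  sum_congr rfl fun k hk => by
    have hk := mem_range.1 hk
    rw [hloc k ε ε' fun i hi => h i (hi.trans hk), h k hk]

lemma abs_fN_sub_fN_le (hr0 : 0 ≤ r) (hr1 : r < 1) (hA : ∀ k ε, |A k ε| ≤ a) {n m : ℕ}
    (hnm : n ≤ m) (ε : ℕ → Bool) :
    |fN r A m ε - fN r A n ε| ≤ a / 2 * (r ^ n / (1 - r)) := by
  have ha : 0 ≤ a := (abs_nonneg _).trans (hA 0 ε)
  rw [fN, fN, ← sum_Ico_eq_sub _ hnm]
  calc _ ≤ ∑ k ∈ Ico n m, |A k ε / 2 * r ^ k * sgn (ε k)| := abs_sum_le_sum_abs _ _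
    _ ≤ ∑ k ∈ Ico n m, a / 2 * r ^ k := sum_le_sum fun k _ => by
        rw [abs_mul, abs_mul, abs_sgn, mul_one, abs_div, abs_two, abs_of_nonneg (pow_nonneg hr0 k)]
        gcongr
        exact hA k ε
    _ = a / 2 * ∑ k ∈ Ico n m, r ^ k := (mul_sum _ _ _).symm
    _ ≤ a / 2 * (r ^ n / (1 - r)) := by gcongr; exact geom_sum_Ico_le_of_lt_one hr0 hr1

lemma abs_fN_sub_fN_ge (hr0 : 0 ≤ r) (hr1 : r < 1) (hA : ∀ k ε, 1 ≤ A k ε ∧ A k ε ≤ a)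
    (hloc : ∀ k ε ε', (∀ i < k, ε i = ε' i) → A k ε = A k ε') {n l : ℕ} (hl : l < n)
    {ε ε' : ℕ → Bool} (hagree : ∀ k < l, ε k = ε' k) (hne : ε l ≠ ε' l) :
    r ^ l - a * (r ^ (l + 1) / (1 - r)) ≤ |fN r A n ε - fN r A n ε'| := by
  have hAabs : ∀ k ε, |A k ε| ≤ a := fun k ε => abs_le.2 ⟨by linarith [hA k ε], (hA k ε).2⟩
  have htail := abs_fN_sub_fN_le hr0 hr1 hAabs (show l + 1 ≤ n by omega) ε
  have htail' := abs_fN_sub_fN_le hr0 hr1 hAabs (show l + 1 ≤ n by omega) ε'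
  have hdigit : r ^ l ≤ |A l ε / 2 * r ^ l * sgn (ε l) - A l ε' / 2 * r ^ l * sgn (ε' l)| := by
    rw [← hloc l ε ε' hagree, ← mul_sub, abs_mul, abs_sgn_sub_sgn hne, abs_mul, abs_div, abs_two,
      abs_of_nonneg (pow_nonneg hr0 l), abs_of_pos (by linarith [hA l ε])]
    nlinarith [(hA l ε).1, pow_nonneg hr0 l]
  set digit := A l ε / 2 * r ^ l * sgn (ε l) - A l ε' / 2 * r ^ l * sgn (ε' l)
  have hsplit : fN r A n ε - fN r A n ε' =
      digit + ((fN r A n ε - fN r A (l + 1) ε) - (fN r A n ε' - fN r A (l + 1) ε')) := by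
    rw [fN_succ, fN_succ, fN_congr hloc hagree]
    ring
  rw [hsplit]
  linarith [abs_sub_abs_le_abs_add digit
      ((fN r A n ε - fN r A (l + 1) ε) - (fN r A n ε' - fN r A (l + 1) ε')),
    abs_sub (fN r A n ε - fN r A (l + 1) ε) (fN r A n ε' - fN r A (l + 1) ε')]

lemma exists_agree_le_norm_sub (hr0 : 0 < r) (hr : r ≤ 1 / 16) (ha : a ≤ 3)
    (hA : ∀ k ε, 1 ≤ A k ε ∧ A k ε ≤ a)
    (hloc : ∀ k ε ε', (∀ i < k, ε i = ε' i) → A k ε = A k ε') {n : ℕ} (hn : 1 ≤ n)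
    {σ₀ : Fin n → Bool} {y : ℂ} (hy : ‖y - (fN r A n (extWord n σ₀) : ℂ)‖ = r ^ (n - 1) / 2)
    (σ : Fin n → Bool) :
    ∃ l < n, (∀ k : Fin n, (k : ℕ) < l → σ k = σ₀ k) ∧
      r ^ l / 4 ≤ ‖y - (fN r A n (extWord n σ) : ℂ)‖ := by
  by_cases hσ : σ = σ₀
  · subst hσ
    refine ⟨n - 1, by omega, fun _ _ => rfl, ?_⟩
    rw [hy]
    linarith [pow_nonneg hr0.le (n - 1)]
  have hne : extWord n σ ≠ extWord n σ₀ := fun h => hσ <| funext fun k => by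
    simpa [extWord_of_lt _ k.isLt] using congrFun h k
  set l := PiNat.firstDiff (extWord n σ) (extWord n σ₀)
  have hdiff := PiNat.apply_firstDiff_ne hne
  have hl : l < n := by
    by_contra! h
    exact hdiff (by rw [extWord_of_le _ h, extWord_of_le _ h])
  refine ⟨l, hl, fun k hk => ?_, ?_⟩
  · simpa [extWord_of_lt _ k.isLt] using PiNat.apply_eq_of_lt_firstDiff hk
  have hsep := abs_fN_sub_fN_ge hr0.le (by linarith) hA hloc hl (ε' := extWord n σ₀)
    (fun k hk => PiNat.apply_eq_of_lt_firstDiff hk) hdiff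
  have htri : |fN r A n (extWord n σ) - fN r A n (extWord n σ₀)| ≤
      ‖y - (fN r A n (extWord n σ) : ℂ)‖ + ‖y - (fN r A n (extWord n σ₀) : ℂ)‖ := by
    rw [← Real.norm_eq_abs, ← Complex.norm_real, Complex.ofReal_sub, norm_sub_rev y]
    exact norm_sub_le_norm_sub_add_norm_sub _ _ _
  have hrl : r ^ (n - 1) ≤ r ^ l := pow_le_pow_of_le_one hr0.le (by linarith) (by omega)
  have hsmall : a * (r ^ (l + 1) / (1 - r)) ≤ r ^ l / 4 := by
    have hratio : r / (1 - r) ≤ 1 / 15 := by rw [div_le_iff₀ (by linarith)]; linarith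
    have hnonneg : 0 ≤ r / (1 - r) := div_nonneg hr0.le (by linarith)
    calc a * (r ^ (l + 1) / (1 - r)) = r ^ l * (a * (r / (1 - r))) := by ring
      _ ≤ r ^ l * (1 / 4) := by gcongr; nlinarith
      _ = r ^ l / 4 := by ring
  linarith

lemma abs_log_norm_sub_fN_sub_le (hr0 : 0 < r) (hr : r ≤ 1 / 16) (ha : a ≤ 3)
    (hA : ∀ k ε, 1 ≤ A k ε ∧ A k ε ≤ a)
    (hloc : ∀ k ε ε', (∀ i < k, ε i = ε' i) → A k ε = A k ε') {n m l : ℕ} (hl : l < n)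
    (hnm : n ≤ m) {ε ε' : ℕ → Bool} (hεε' : ∀ k < n, ε' k = ε k) {y : ℂ}
    (hy : r ^ l / 4 ≤ ‖y - (fN r A n ε : ℂ)‖) :
    |log ‖y - (fN r A n ε : ℂ)‖ - log ‖y - (fN r A m ε' : ℂ)‖| ≤ 16 * r ^ (n - l) := by
  have hrn : r ^ n = r ^ l * r ^ (n - l) := by rw [← pow_add]; congr 1; omega
  have hrnl : r ^ (n - l) ≤ 1 / 16 := (pow_le_of_le_one hr0.le (by linarith) (by omega)).trans hr
  have hAabs : ∀ k ε, |A k ε| ≤ a := fun k ε => abs_le.2 ⟨by linarith [hA k ε], (hA k ε).2⟩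
  have htail : a / 2 * (r ^ n / (1 - r)) ≤ 2 * r ^ n := by
    have : r ^ n / (1 - r) ≤ 16 / 15 * r ^ n := by
      rw [div_le_iff₀ (by linarith)]; nlinarith [pow_nonneg hr0.le n]
    nlinarith [pow_nonneg hr0.le n, div_nonneg (pow_nonneg hr0.le n) (by linarith : 0 ≤ 1 - r)]
  have hclose : |‖y - (fN r A n ε : ℂ)‖ - ‖y - (fN r A m ε' : ℂ)‖| ≤ 2 * r ^ n := by
    calc _ ≤ ‖(y - (fN r A n ε : ℂ)) - (y - (fN r A m ε' : ℂ))‖ := abs_norm_sub_norm_le _ _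
      _ = |fN r A m ε' - fN r A n ε'| := by
          rw [fN_congr hloc hεε', sub_sub_sub_cancel_left, ← Complex.ofReal_sub, Complex.norm_real,
            Real.norm_eq_abs]
      _ ≤ 2 * r ^ n := (abs_fN_sub_fN_le hr0.le (by linarith) hAabs hnm ε').trans htail
  have hpos : 0 < r ^ l / 8 := by positivity
  have hfar : 2 * r ^ n ≤ r ^ l / 8 := by rw [hrn]; nlinarith [pow_nonneg hr0.le l]
  calc _ ≤ |‖y - (fN r A n ε : ℂ)‖ - ‖y - (fN r A m ε' : ℂ)‖| / (r ^ l / 8) :=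
        abs_log_sub_log_le_div hpos (by linarith) (by linarith [abs_le.1 hclose])
    _ ≤ 2 * r ^ n / (r ^ l / 8) := by gcongr
    _ = 16 * r ^ (n - l) := by rw [hrn]; field_simp; ring

end Expansion

lemma abs_gTilde_sub_gTilde_add_le (r : ℝ) (A : ℕ → (ℕ → Bool) → ℝ) {n d : ℕ} (y : ℂ)
    (B : (Fin n → Bool) → ℝ)
    (hB : ∀ σ τ, |log ‖y - (fN r A n (extWord n σ) : ℂ)‖ -
      log ‖y - (fN r A (n + d) (extWord (n + d) (Fin.append σ τ)) : ℂ)‖| ≤ B σ) :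
    |gTilde r A n y - gTilde r A (n + d) y| ≤ (2 : ℝ)⁻¹ ^ n * ∑ σ, B σ := by
  set u : (Fin n → Bool) → ℝ := fun σ => log ‖y - (fN r A n (extWord n σ) : ℂ)‖
  set v : (Fin n → Bool) → (Fin d → Bool) → ℝ :=
    fun σ τ => log ‖y - (fN r A (n + d) (extWord (n + d) (Fin.append σ τ)) : ℂ)‖
  have hmean : ∀ c : ℝ, (2 : ℝ)⁻¹ ^ d * ∑ _τ : Fin d → Bool, c = c := fun c => by
    simp [card_univ]
  have hn : gTilde r A n y = (2 : ℝ)⁻¹ ^ n * ∑ σ, (2 : ℝ)⁻¹ ^ d * ∑ _τ : Fin d → Bool, u σ := by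
    simp only [hmean]; rfl
  have hm : gTilde r A (n + d) y = (2 : ℝ)⁻¹ ^ n * ∑ σ, (2 : ℝ)⁻¹ ^ d * ∑ τ, v σ τ := by
    rw [gTilde, ← (Fin.appendEquiv n d).sum_comp, Fintype.sum_prod_type, pow_add, mul_assoc,
      mul_sum]
    rfl
  rw [hn, hm, ← mul_sub, ← sum_sub_distrib, abs_mul, abs_of_pos (by positivity)]
  gcongr
  refine (abs_sum_le_sum_abs _ _).trans (sum_le_sum fun σ _ => ?_)
  rw [← mul_sub, ← sum_sub_distrib, abs_mul, abs_of_pos (by positivity)]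
  calc _ ≤ (2 : ℝ)⁻¹ ^ d * ∑ _τ : Fin d → Bool, B σ := by
        gcongr
        exact (abs_sum_le_sum_abs _ _).trans (sum_le_sum fun τ _ => hB σ τ)
    _ = B σ := hmean _

theorem stmt7_general (a r : ℝ) (ha3 : a ≤ 3) (hr0 : 0 < r) (hr1 : r ≤ 1 / 16) :
    ∃ C : ℝ, 0 < C ∧
      ∀ A : ℕ → (ℕ → Bool) → ℝ,
        (∀ ε, A 0 ε = 1) →
        (∀ k ε, 1 ≤ A k ε ∧ A k ε ≤ a) →
        (∀ k ε ε', (∀ j < k, ε j = ε' j) → A k ε = A k ε') →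
      ∀ n m : ℕ, 1 ≤ n → n ≤ m →
      ∀ σ₀ : Fin n → Bool, ∀ y : ℂ,
        ‖y - (fN r A n (extWord n σ₀) : ℂ)‖ = r ^ (n - 1) / 2 →
        |gTilde r A n y - gTilde r A m y| ≤ C * (2 : ℝ)⁻¹ ^ n := by
  refine ⟨16, by norm_num, fun A _ hA hloc n m hn hnm σ₀ y hy => ?_⟩
  obtain ⟨d, rfl⟩ := Nat.exists_eq_add_of_le hnm
  choose L hLn hLagree hLnorm using exists_agree_le_norm_sub hr0 hr1 ha3 hA hloc hn hy
  calc |gTilde r A n y - gTilde r A (n + d) y| ≤ (2 : ℝ)⁻¹ ^ n * ∑ σ, 16 * r ^ (n - L σ) :=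
        abs_gTilde_sub_gTilde_add_le r A y _ fun σ τ =>
          abs_log_norm_sub_fN_sub_le hr0 hr1 ha3 hA hloc (hLn σ) le_self_add
            (fun _ hk => extWord_append_of_lt σ τ hk) (hLnorm σ)
    _ ≤ (2 : ℝ)⁻¹ ^ n * 16 := by
        rw [← mul_sum]
        gcongr
        linarith [sum_pow_sub_le_one hr0.le (by linarith) L hLn hLagree]
    _ = 16 * (2 : ℝ)⁻¹ ^ n := mul_comm _ _

/-- Fix `a ∈ [1,3]` and `r ∈ (0,1/16]`. There is `C > 0` (depending only on
`a, r`) such that for any admissible coefficients, all `1 ≤ n ≤ m`, every `x₀ ∈ K_n` and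
every `y ∈ ℝ²` with `|y − x₀| = r^{n−1}/2`, one has `| g̃_n(y) − g̃_m(y) | ≤ C 2^{−n}`. -/
theorem stmt7 (a r : ℝ) (ha1 : 1 ≤ a) (ha3 : a ≤ 3) (hr0 : 0 < r) (hr1 : r ≤ 1 / 16) :
    ∃ C : ℝ, 0 < C ∧
      ∀ A : ℕ → (ℕ → Bool) → ℝ,
        (∀ ε, A 0 ε = 1) →
        (∀ k ε, 1 ≤ A k ε ∧ A k ε ≤ a) →
        (∀ k ε ε', (∀ j < k, ε j = ε' j) → A k ε = A k ε') →
      ∀ n m : ℕ, 1 ≤ n → n ≤ m →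
      ∀ σ₀ : Fin n → Bool, ∀ y : ℂ,
        ‖y - (fN r A n (extWord n σ₀) : ℂ)‖ = r ^ (n - 1) / 2 →
        |gTilde r A n y - gTilde r A m y| ≤ C * (2 : ℝ)⁻¹ ^ n :=
  stmt7_general a r ha3 hr0 hr1

end
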